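/- arXiv:2001.09649 — 5 statements merged into one kernel-verified Lean document; each statement's English description precedes it below -/
import Mathlib

section
/- Every post-fixed point S of fsim (i.e., every S with S ⊆ fsim(S)) is contained in the full-simulation relation S≺ = { (P,Q) | ∀ P', P →_L* P' ∧ P' irreducible → ∃ Q', Q →_R* Q' ∧ (P',Q') ∈ B }. -/
/-- A state is irreducible w.r.t. a transition relation if it has no successor. -/
def Irred {St : Type} (T : St → St → Prop) (P : St) : Prop := ∀ P', ¬ T P P'

/-- The `fsim` operator on relations between left and right states. -/
def fsim {StL StR : Type} (L : StL → StL → Prop) (R : StR → StR → Prop)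
    (B : StL → StR → Prop) (S : StL → StR → Prop) : StL → StR → Prop :=
  fun P Q =>
    (Irred L P → ∃ Q', Relation.ReflTransGen R Q Q' ∧ B P Q') ∧
    (¬ Irred L P → ∀ P', L P P' → ∃ Q', Relation.ReflTransGen R Q Q' ∧ S P' Q')


/-- The full-simulation relation. -/
def Sprec {StL StR : Type} (L : StL → StL → Prop) (R : StR → StR → Prop)
    (B : StL → StR → Prop) : StL → StR → Prop :=
  fun P Q => ∀ P', Relation.ReflTransGen L P P' ∧ Irred L P' →
    ∃ Q', Relation.ReflTransGen R Q Q' ∧ B P' Q'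

open Relation

theorem exists_reflTransGen_of_simulates_step {α β : Type*} {L : α → α → Prop}
    {R : β → β → Prop} {S : α → β → Prop}
    (hsim : ∀ P Q P', S P Q → L P P' → ∃ Q', ReflTransGen R Q Q' ∧ S P' Q')
    {P P' : α} {Q : β} (hPQ : S P Q) (hPP' : ReflTransGen L P P') :
    ∃ Q', ReflTransGen R Q Q' ∧ S P' Q' := by
  induction hPP' with
  | refl => exact ⟨Q, .refl, hPQ⟩
  | tail _ hstep ih =>
    obtain ⟨Q₁, hQQ₁, hS₁⟩ := ih
    obtain ⟨Q₂, hQ₁Q₂, hS₂⟩ := hsim _ _ _ hS₁ hstep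
    exact ⟨Q₂, hQQ₁.trans hQ₁Q₂, hS₂⟩

theorem simulates_step_of_le_fsim {StL StR : Type} {L : StL → StL → Prop}
    {R : StR → StR → Prop} {B S : StL → StR → Prop} (hS : ∀ P Q, S P Q → fsim L R B S P Q)
    (P : StL) (Q : StR) (P' : StL) (hPQ : S P Q) (hstep : L P P') :
    ∃ Q', ReflTransGen R Q Q' ∧ S P' Q' :=
  (hS P Q hPQ).2 (fun hirr => hirr P' hstep) P' hstep

theorem postfixed_le_Sprec {StL StR : Type} (L : StL → StL → Prop) (R : StR → StR → Prop)
    (B : StL → StR → Prop) (S : StL → StR → Prop)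
    (hS : ∀ P Q, S P Q → fsim L R B S P Q) :
    ∀ P Q, S P Q → Sprec L R B P Q := by
  rintro P Q hPQ P' ⟨hPP', hirr⟩
  obtain ⟨Q₁, hQQ₁, hS₁⟩ :=
    exists_reflTransGen_of_simulates_step (simulates_step_of_le_fsim hS) hPQ hPP'
  obtain ⟨Q₂, hQ₁Q₂, hB⟩ := (hS P' Q₁ hS₁).1 hirr
  exact ⟨Q₂, hQQ₁.trans hQ₁Q₂, hB⟩
end

section
/- Define S⪯ = { (P,Q) | (∀ P', P →_L* P' ∧ P' irreducible → ∃ Q', Q →_R* Q' ∧ (P',Q') ∈ B) ∨ (Q diverges) }, where Q diverges means there exists an infinite →_R-sequence starting from Q. Then S⪯ is a post-fixed point of the operator psim: S⪯ ⊆ psim(S⪯). -/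
/-- A state diverges if there is an infinite transition sequence starting from it. -/
def Diverges {St : Type} (T : St → St → Prop) (Q : St) : Prop :=
  ∃ g : ℕ → St, g 0 = Q ∧ ∀ n, T (g n) (g (n + 1))

/-- The `psim` operator on relations between left and right states. -/
def psim {StL StR : Type} (L : StL → StL → Prop) (R : StR → StR → Prop)
    (B : StL → StR → Prop) (S : StL → StR → Prop) : StL → StR → Prop :=
  fun P Q =>
    ((Irred L P → ∃ Q', Relation.ReflTransGen R Q Q' ∧ B P Q') ∧
     (¬ Irred L P → ∀ P', L P P' → ∃ Q', Relation.ReflTransGen R Q Q' ∧ S P' Q')) ∨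
    (∃ Q', R Q Q' ∧ S P Q')

/-- The partial-simulation relation. -/
def Spreq {StL StR : Type} (L : StL → StL → Prop) (R : StR → StR → Prop)
    (B : StL → StR → Prop) : StL → StR → Prop :=
  fun P Q =>
    (∀ P', Relation.ReflTransGen L P P' ∧ Irred L P' →
      ∃ Q', Relation.ReflTransGen R Q Q' ∧ B P' Q') ∨
    Diverges R Q

theorem Diverges.exists_step_diverges {St : Type} {T : St → St → Prop} {Q : St}
    (h : Diverges T Q) : ∃ Q', T Q Q' ∧ Diverges T Q' := by
  obtain ⟨g, rfl, hg⟩ := h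
  exact ⟨g 1, hg 0, fun n => g (n + 1), rfl, fun n => hg (n + 1)⟩

theorem Spreq_of_step_of_normalForms_matched {StL StR : Type} {L : StL → StL → Prop}
    {R : StR → StR → Prop} {B : StL → StR → Prop} {P P' : StL} {Q : StR}
    (hnf : ∀ P'', Relation.ReflTransGen L P P'' ∧ Irred L P'' →
      ∃ Q', Relation.ReflTransGen R Q Q' ∧ B P'' Q')
    (hstep : L P P') : Spreq L R B P' Q :=
  Or.inl fun P'' ⟨hreach, hirr⟩ => hnf P'' ⟨.head hstep hreach, hirr⟩

theorem Spreq_postfixed {StL StR : Type} (L : StL → StL → Prop) (R : StR → StR → Prop)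
    (B : StL → StR → Prop) :
    ∀ P Q, Spreq L R B P Q → psim L R B (Spreq L R B) P Q := by
  rintro P Q (hnf | hdiv)
  · exact Or.inl ⟨fun hirr => hnf P ⟨.refl, hirr⟩,
      fun _ P' hstep => ⟨Q, .refl, Spreq_of_step_of_normalForms_matched hnf hstep⟩⟩
  · obtain ⟨Q', hstep, hdiv'⟩ := hdiv.exists_step_diverges
    exact Or.inr ⟨Q', hstep, Or.inr hdiv'⟩
end

section
/- Every post-fixed point S of psim is contained in S⪯ = { (P,Q) | (∀ P', P →_L* P' ∧ P' irreducible → ∃ Q', Q →_R* Q' ∧ (P',Q') ∈ B) ∨ Q diverges }; consequently S⪯ is the greatest fixed point of psim. -/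
/-! If `Q` does not diverge, `flip R` is accessible at `Q`, so a post-fixed point `S` of `psim`
can use its stuttering clause (an `R`-step with `P` fixed) only finitely often before it must
match the next `L`-step of `P`, or reach `B` when `P` is irreducible. Induction along the
`L`-path to an irreducible `P'` then gives the first disjunct of `Spreq`. For the fixed point,
`Spreq` is itself post-fixed, hence so is `psim Spreq` by monotonicity. -/

open Relation

section

variable {StL StR : Type} {L : StL → StL → Prop} {R : StR → StR → Prop}
  {B : StL → StR → Prop} {S : StL → StR → Prop}

theorem acc_flip_of_not_diverges {Q : StR} (h : ¬ Diverges R Q) : Acc (flip R) Q :=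
  not_not.mp fun hQ => h (not_acc_iff_exists_descending_chain.mp hQ)

theorem Acc.flip_of_reflTransGen {Q Q' : StR} (hQ : Acc (flip R) Q) (h : ReflTransGen R Q Q') :
    Acc (flip R) Q' := by
  induction h with
  | refl => exact hQ
  | tail _ hstep ih => exact ih.inv hstep

theorem exists_reflTransGen_of_acc {T Φ : StR → Prop}
    (hT : ∀ Q, T Q → (∃ Q', ReflTransGen R Q Q' ∧ Φ Q') ∨ ∃ Q', R Q Q' ∧ T Q')
    {Q : StR} (hQ : Acc (flip R) Q) (h : T Q) : ∃ Q', ReflTransGen R Q Q' ∧ Φ Q' := by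
  induction hQ with
  | intro Q _ ih =>
    rcases hT Q h with hΦ | ⟨Q₁, hstep, hT₁⟩
    · exact hΦ
    · obtain ⟨Q', hQ', hΦ⟩ := ih Q₁ hstep hT₁
      exact ⟨Q', hQ'.head hstep, hΦ⟩

theorem exists_of_irred_of_le_psim (hS : S ≤ psim L R B S) {P : StL} {Q : StR}
    (hQ : Acc (flip R) Q) (hPQ : S P Q) (hP : Irred L P) :
    ∃ Q', ReflTransGen R Q Q' ∧ B P Q' := by
  refine exists_reflTransGen_of_acc (fun Q hPQ => ?_) hQ hPQ
  exact (hS P Q hPQ).imp_left fun h => h.1 hP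

theorem exists_of_step_of_le_psim (hS : S ≤ psim L R B S) {P P' : StL} {Q : StR}
    (hQ : Acc (flip R) Q) (hPQ : S P Q) (hPP' : L P P') :
    ∃ Q', ReflTransGen R Q Q' ∧ S P' Q' := by
  refine exists_reflTransGen_of_acc (fun Q hPQ => ?_) hQ hPQ
  exact (hS P Q hPQ).imp_left fun h => h.2 (fun hP => hP P' hPP') P' hPP'

theorem exists_of_reflTransGen_of_le_psim (hS : S ≤ psim L R B S) {P P' : StL}
    (hPP' : ReflTransGen L P P') (hP' : Irred L P') {Q : StR} (hQ : Acc (flip R) Q)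
    (hPQ : S P Q) : ∃ Q', ReflTransGen R Q Q' ∧ B P' Q' := by
  induction hPP' using ReflTransGen.head_induction_on generalizing Q with
  | refl => exact exists_of_irred_of_le_psim hS hQ hPQ hP'
  | head hstep _ ih =>
    obtain ⟨Q₁, hQQ₁, hS₁⟩ := exists_of_step_of_le_psim hS hQ hPQ hstep
    obtain ⟨Q', hQ₁Q', hB⟩ := ih (hQ.flip_of_reflTransGen hQQ₁) hS₁
    exact ⟨Q', hQQ₁.trans hQ₁Q', hB⟩

theorem le_spreq_of_le_psim (hS : S ≤ psim L R B S) : S ≤ Spreq L R B := by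
  intro P Q hPQ
  by_cases hQ : Diverges R Q
  · exact Or.inr hQ
  · exact Or.inl fun P' ⟨hPP', hP'⟩ =>
      exists_of_reflTransGen_of_le_psim hS hPP' hP' (acc_flip_of_not_diverges hQ) hPQ

theorem psim_mono : Monotone (psim L R B) := by
  intro S S' hSS' P Q hPQ
  rcases hPQ with ⟨hirred, hstep⟩ | ⟨Q', hQQ', hPQ'⟩
  · refine Or.inl ⟨hirred, fun hP P' hPP' => ?_⟩
    obtain ⟨Q', hQQ', hPQ'⟩ := hstep hP P' hPP'
    exact ⟨Q', hQQ', hSS' P' Q' hPQ'⟩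
  · exact Or.inr ⟨Q', hQQ', hSS' P Q' hPQ'⟩

theorem spreq_le_psim : Spreq L R B ≤ psim L R B (Spreq L R B) := by
  rintro P Q (hB | ⟨g, rfl, hg⟩)
  · refine Or.inl ⟨fun hP => hB P ⟨.refl, hP⟩, fun _ P' hPP' => ⟨Q, .refl, ?_⟩⟩
    exact Or.inl fun P'' ⟨hP'P'', hP''⟩ => hB P'' ⟨hP'P''.head hPP', hP''⟩
  · exact Or.inr ⟨g 1, hg 0, Or.inr ⟨fun n => g (n + 1), rfl, fun n => hg (n + 1)⟩⟩

end

theorem Spreq_gfp {StL StR : Type} (L : StL → StL → Prop) (R : StR → StR → Prop)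
    (B : StL → StR → Prop) :
    (∀ S : StL → StR → Prop, (∀ P Q, S P Q → psim L R B S P Q) →
      ∀ P Q, S P Q → Spreq L R B P Q) ∧
    (∀ P Q, psim L R B (Spreq L R B) P Q ↔ Spreq L R B P Q) := by
  refine ⟨fun S hS => le_spreq_of_le_psim hS, fun P Q => ⟨fun h => ?_, spreq_le_psim P Q⟩⟩
  exact le_spreq_of_le_psim (psim_mono spreq_le_psim) P Q h
end

section
/- If C = { (P',Q') | Reach⁺((P',Q'), S_C) } for some fixed relation S_C, then CoReach((P,Q),C) implies Reach⁺((P,Q),S_C) for all pairs (P,Q); consequently f_C(S) ⊆ f_∅(S ∪ S_C). -/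
/-- `CoReach (P,Q) C`: some right state reachable from `Q` pairs with `P` in `C`. -/
def CoReach {StL StR : Type} (R : StR → StR → Prop)
    (C : StL → StR → Prop) (P : StL) (Q : StR) : Prop :=
  ∃ Q', Relation.ReflTransGen R Q Q' ∧ C P Q'

/-- `ReachPlus (P,Q) S`: `P` is reducible and every left step is matched. -/
def ReachPlus {StL StR : Type} (L : StL → StL → Prop) (R : StR → StR → Prop)
    (S : StL → StR → Prop) (P : StL) (Q : StR) : Prop :=
  (∃ P', L P P') ∧
    ∀ P', L P P' → ∃ Q', Relation.ReflTransGen R Q Q' ∧ S P' Q'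

/-- The operator `f_C`. -/
def fC {StL StR : Type} (L : StL → StL → Prop) (R : StR → StR → Prop)
    (C : StL → StR → Prop) (S : StL → StR → Prop) : StL → StR → Prop :=
  fun P Q => CoReach R C P Q ∨ ReachPlus L R S P Q

namespace ReachPlus

variable {StL StR : Type} {L : StL → StL → Prop} {R : StR → StR → Prop}
  {S S' : StL → StR → Prop} {P : StL} {Q Q' : StR}

theorem mono (hSS' : ∀ p q, S p q → S' p q) (h : ReachPlus L R S P Q) :
    ReachPlus L R S' P Q :=
  ⟨h.1, fun P' hL => (h.2 P' hL).imp fun _ ⟨hR, hS⟩ => ⟨hR, hSS' _ _ hS⟩⟩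

theorem of_reflTransGen (hQQ' : Relation.ReflTransGen R Q Q') (h : ReachPlus L R S P Q') :
    ReachPlus L R S P Q :=
  ⟨h.1, fun P' hL => (h.2 P' hL).imp fun _ ⟨hR, hS⟩ => ⟨hQQ'.trans hR, hS⟩⟩

end ReachPlus

theorem CoReach.reachPlus {StL StR : Type} {L : StL → StL → Prop} {R : StR → StR → Prop}
    {SC C : StL → StR → Prop} {P : StL} {Q : StR}
    (hC : ∀ P Q, C P Q → ReachPlus L R SC P Q) (h : CoReach R C P Q) :
    ReachPlus L R SC P Q :=
  let ⟨_, hQQ', hCPQ'⟩ := h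
  (hC P _ hCPQ').of_reflTransGen hQQ'

theorem fC_coreach {StL StR : Type} (L : StL → StL → Prop) (R : StR → StR → Prop)
    (SC : StL → StR → Prop) (C : StL → StR → Prop)
    (hC : ∀ P Q, C P Q ↔ ReachPlus L R SC P Q) :
    (∀ P Q, CoReach R C P Q → ReachPlus L R SC P Q) ∧
    (∀ (S : StL → StR → Prop) (P : StL) (Q : StR),
      fC L R C S P Q → fC L R (fun _ _ => False) (fun p q => S p q ∨ SC p q) P Q) := by
  have hCoReach : ∀ P Q, CoReach R C P Q → ReachPlus L R SC P Q :=
    fun _ _ => CoReach.reachPlus fun P Q => (hC P Q).1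
  refine ⟨hCoReach, fun S P Q h => Or.inr ?_⟩
  rcases h with hCo | hReach
  · exact (hCoReach P Q hCo).mono fun _ _ => Or.inr
  · exact hReach.mono fun _ _ => Or.inl
end

section
/- If a pair (P,Q) belongs to the greatest fixed point of psim and P terminates in P' (i.e., P →_L* P' with P' irreducible), then either there exists Q' with Q →_R* Q' and (P',Q') ∈ B, or Q diverges. -/
/-!
Fix a post-fixed point `S ⊆ psim S` containing `(P, Q)`. As long as `Q` takes right steps through
the second disjunct of `psim` it stays related to the same `P`, so either this stuttering goes on
forever (and `Q` diverges) or it stops at some `Q₀` where the first disjunct holds. There `Q₀`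
either matches the next left step of the run `P →* P'`, giving a new pair in `S`, or, at `P'`
itself, reaches a `B`-related state. Induction on the run finishes the argument.
-/

open Relation

namespace Diverges

variable {St : Type} {R : St → St → Prop}

theorem of_forall_exists {p : St → Prop} (h : ∀ x, p x → ∃ y, R x y ∧ p y) {x : St}
    (hx : p x) : Diverges R x := by
  choose next hnext using fun y : {y // p y} => h y.1 y.2
  let g : ℕ → {y // p y} := fun n => (fun y => ⟨next y, (hnext y).2⟩)^[n] ⟨x, hx⟩
  refine ⟨fun n => (g n).1, rfl, fun n => ?_⟩
  simpa only [g, Function.iterate_succ_apply'] using (hnext (g n)).1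

theorem head {x y : St} (hxy : R x y) (hy : Diverges R y) : Diverges R x := by
  obtain ⟨g, rfl, hg⟩ := hy
  refine ⟨Nat.rec x fun n _ => g n, rfl, fun n => ?_⟩
  cases n with
  | zero => exact hxy
  | succ n => exact hg n

theorem of_reflTransGen {x y : St} (hxy : ReflTransGen R x y) (hy : Diverges R y) :
    Diverges R x := by
  induction hxy using ReflTransGen.head_induction_on with
  | refl => exact hy
  | head hstep _ ih => exact head hstep ih

end Diverges

section Reachability

variable {St : Type} {R : St → St → Prop} {q : St → Prop}

theorem exists_reflTransGen_or_diverges {p : St → Prop} (h : ∀ x, p x → q x ∨ ∃ y, R x y ∧ p y)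
    {x : St} (hx : p x) : (∃ y, ReflTransGen R x y ∧ q y) ∨ Diverges R x := by
  by_cases hq : ∃ y, ReflTransGen R x y ∧ q y
  · exact Or.inl hq
  · refine Or.inr
      (Diverges.of_forall_exists (p := fun y => ReflTransGen R x y ∧ p y) ?_ ⟨.refl, hx⟩)
    rintro y ⟨hxy, hy⟩
    rcases h y hy with hqy | ⟨z, hyz, hz⟩
    · exact absurd ⟨y, hxy, hqy⟩ hq
    · exact ⟨z, hyz, hxy.tail hyz, hz⟩

theorem exists_reflTransGen_or_diverges_of_reflTransGen {x y : St} (hxy : ReflTransGen R x y) :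
    (∃ z, ReflTransGen R y z ∧ q z) ∨ Diverges R y →
      (∃ z, ReflTransGen R x z ∧ q z) ∨ Diverges R x :=
  Or.imp (fun ⟨z, hyz, hz⟩ => ⟨z, hxy.trans hyz, hz⟩) (Diverges.of_reflTransGen hxy)

end Reachability

theorem psim_postfixed_stabilizes_or_diverges {StL StR : Type} {L : StL → StL → Prop}
    {R : StR → StR → Prop} {B S : StL → StR → Prop} (hS : ∀ P Q, S P Q → psim L R B S P Q)
    {P : StL} {Q : StR} (hPQ : S P Q) :
    (∃ Q₀, ReflTransGen R Q Q₀ ∧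
      (Irred L P → ∃ Q', ReflTransGen R Q₀ Q' ∧ B P Q') ∧
      (¬ Irred L P → ∀ P', L P P' → ∃ Q', ReflTransGen R Q₀ Q' ∧ S P' Q')) ∨
    Diverges R Q :=
  exists_reflTransGen_or_diverges (hS P) hPQ

theorem gfp_psim_terminating {StL StR : Type} (L : StL → StL → Prop) (R : StR → StR → Prop)
    (B : StL → StR → Prop) (P : StL) (Q : StR)
    (hgfp : ∃ S : StL → StR → Prop, (∀ P' Q', S P' Q' → psim L R B S P' Q') ∧ S P Q)
    (P' : StL) (hrun : Relation.ReflTransGen L P P') (hirr : Irred L P') :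
    (∃ Q', Relation.ReflTransGen R Q Q' ∧ B P' Q') ∨ Diverges R Q := by
  obtain ⟨S, hS, hPQ⟩ := hgfp
  induction hrun using ReflTransGen.head_induction_on generalizing Q with
  | refl =>
    rcases psim_postfixed_stabilizes_or_diverges hS hPQ with ⟨Q₀, hQQ₀, hB, -⟩ | hdiv
    · exact exists_reflTransGen_or_diverges_of_reflTransGen hQQ₀ (Or.inl (hB hirr))
    · exact Or.inr hdiv
  | head hstep _ ih =>
    rcases psim_postfixed_stabilizes_or_diverges hS hPQ with ⟨Q₀, hQQ₀, -, hmatch⟩ | hdiv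
    · obtain ⟨Q₁, hQ₀Q₁, hS₁⟩ := hmatch (fun hP => hP _ hstep) _ hstep
      exact exists_reflTransGen_or_diverges_of_reflTransGen (hQQ₀.trans hQ₀Q₁) (ih _ hS₁)
    · exact Or.inr hdiv
end
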